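/- There exists a constant C > 0 such that for all integers R ≥ 2 and t ≥ 1, the number of effective-walk paths confined to the slab {0,…,R} with total cost t that end strictly inside the slab is controlled by complete excursions of cost t+2: Σ_{x=1}^{R−1} Σ_{n=1}^t |D^{R,x}_{n,t}| ≤ C R t² Σ_{n=1}^{t+2} |A^R_{n,t+2}|. -/
import Mathlib

/-- The set `D^{R,x}_{n,t}` of effective-walk paths `(v_0,…,v_n)` confined to the slab
`{0,…,R}`, starting at `0`, ending at `x`, with total cost `n + Σ|v_i − v_{i−1}| = t`. -/
def slabSet (R x n t : ℕ) : Set (Fin (n + 1) → ℤ) :=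
  {v | v 0 = 0 ∧ (∀ i : Fin (n + 1), 0 ≤ v i ∧ v i ≤ (R : ℤ)) ∧
    v (Fin.last n) = (x : ℤ) ∧
    (n : ℤ) + ∑ i : Fin n, |v i.succ - v i.castSucc| = (t : ℤ)}

set_option linter.unusedSectionVars false

namespace SlabAux

/-- half of `x`, rounded up -/
def hh (x : ℕ) : ℕ := (x + 1) / 2

/-- `i` is a ladder point (future minimum) of `V` on `[0,n]`. -/
def Lad (n : ℕ) (V : ℕ → ℤ) (i : ℕ) : Prop := ∀ j, i ≤ j → j ≤ n → V i ≤ V j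

/-- bundled hypotheses about the ℕ-indexed version of a path in `D^{R,x}_{n,t}` -/
structure Good (R x n t : ℕ) (V : ℕ → ℤ) : Prop where
  h0 : V 0 = 0
  hlow : ∀ i, 0 ≤ V i
  hhigh : ∀ i, V i ≤ (R : ℤ)
  hext : ∀ i, n ≤ i → V i = (x : ℤ)
  hcost : (n : ℤ) + ∑ p ∈ Finset.range n, |V (p + 1) - V p| = (t : ℤ)
  hx1 : 1 ≤ x
  hn1 : 1 ≤ n

def Pq (x n : ℕ) (V : ℕ → ℤ) (i : ℕ) : Prop := Lad n V i ∧ V i < ((hh x : ℕ) : ℤ)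
def Pd (x n : ℕ) (V : ℕ → ℤ) (d : ℕ) : Prop := Lad n V (n - d) ∧ ((hh x : ℕ) : ℤ) ≤ V (n - d)

noncomputable instance (x n : ℕ) (V : ℕ → ℤ) : DecidablePred (Pq x n V) :=
  Classical.decPred _
noncomputable instance (x n : ℕ) (V : ℕ → ℤ) : DecidablePred (Pd x n V) :=
  Classical.decPred _

noncomputable def qD (x n : ℕ) (V : ℕ → ℤ) : ℕ := Nat.findGreatest (Pq x n V) n
noncomputable def dD (x n : ℕ) (V : ℕ → ℤ) : ℕ := Nat.findGreatest (Pd x n V) n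
noncomputable def wD (x n : ℕ) (V : ℕ → ℤ) : ℤ := V (n - dD x n V)

def Pr (x n : ℕ) (V : ℕ → ℤ) (i : ℕ) : Prop := Lad n V i ∧ V i = wD x n V
noncomputable instance (x n : ℕ) (V : ℕ → ℤ) : DecidablePred (Pr x n V) :=
  Classical.decPred _
noncomputable def rD (x n : ℕ) (V : ℕ → ℤ) : ℕ := Nat.findGreatest (Pr x n V) n

noncomputable def mD (x n : ℕ) (V : ℕ → ℤ) : ℕ := n - rD x n V
noncomputable def lD (x n : ℕ) (V : ℕ → ℤ) : ℕ := rD x n V - 1 - qD x n V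
noncomputable def deltaD (x n : ℕ) (V : ℕ → ℤ) : ℤ := 2 * wD x n V - (x : ℤ)

/-- the surgered path -/
noncomputable def EN (x n : ℕ) (V : ℕ → ℤ) (p : ℕ) : ℤ :=
  if p ≤ mD x n V then V (rD x n V + p) - wD x n V
  else V (n - p) - (if qD x n V < n - p then deltaD x n V else 0)

/-- the surgered path, with zero padding after time `n` -/
noncomputable def WN (x n : ℕ) (V : ℕ → ℤ) (p : ℕ) : ℤ :=
  if p ≤ n then EN x n V p else 0

noncomputable def TVE (x n : ℕ) (V : ℕ → ℤ) : ℤ :=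
  ∑ p ∈ Finset.range n, |EN x n V (p + 1) - EN x n V p|

noncomputable def kD (x n t : ℕ) (V : ℕ → ℤ) : ℕ :=
  ((t : ℤ) + 2 - (n : ℤ) - TVE x n V).toNat

noncomputable def nD (x n t : ℕ) (V : ℕ → ℤ) : ℕ := n + kD x n t V

section Facts
variable {R x n t : ℕ} {V : ℕ → ℤ} (hG : Good R x n t V)

include hG

lemma hh_pos : 1 ≤ hh x := by have := hG.hx1; unfold hh; omega
lemma hh_le_x : hh x ≤ x := by have := hG.hx1; unfold hh; omega
lemma two_hh : x ≤ 2 * hh x ∧ 2 * hh x ≤ x + 1 := by unfold hh; omega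

lemma lad0 : Lad n V 0 := fun j _ _ => hG.h0 ▸ hG.hlow j
lemma ladn : Lad n V n := by
  intro j h1 h2
  have : j = n := le_antisymm h2 h1
  rw [this]

lemma q_spec : Pq x n V (qD x n V) :=
  Nat.findGreatest_spec (Nat.zero_le n)
    ⟨lad0 hG, by rw [hG.h0]; exact_mod_cast Nat.cast_pos.mpr (hh_pos hG)⟩

lemma q_le : qD x n V ≤ n := Nat.findGreatest_le n

lemma q_max {i : ℕ} (h1 : qD x n V < i) (h2 : i ≤ n) (h3 : Lad n V i) :
    ((hh x : ℕ) : ℤ) ≤ V i := by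
  by_contra hc
  exact Nat.findGreatest_is_greatest h1 h2 ⟨h3, by omega⟩

lemma d_spec : Pd x n V (dD x n V) := by
  apply Nat.findGreatest_spec (Nat.zero_le n)
  constructor
  · simpa using ladn hG
  · simp only [Nat.sub_zero]
    rw [hG.hext n le_rfl]
    exact_mod_cast hh_le_x hG

lemma w_ge : ((hh x : ℕ) : ℤ) ≤ wD x n V := (d_spec hG).2

lemma w_le : wD x n V ≤ (x : ℤ) := by
  have h := (d_spec hG).1 n (Nat.sub_le n _) le_rfl
  rwa [hG.hext n le_rfl] at h

lemma rP_min {j : ℕ} (hj : j ≤ n) (h1 : Lad n V j) (h2 : ((hh x : ℕ) : ℤ) ≤ V j) :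
    n - dD x n V ≤ j := by
  by_contra hc
  push_neg at hc
  have hgt : dD x n V < n - j := by omega
  have := Nat.findGreatest_is_greatest (P := Pd x n V) hgt (by omega)
  apply this
  constructor
  · have : n - (n - j) = j := by omega
    rw [this]; exact h1
  · have : n - (n - j) = j := by omega
    rw [this]; exact h2

lemma r_spec : Pr x n V (rD x n V) :=
  Nat.findGreatest_spec (Nat.sub_le n (dD x n V)) ⟨(d_spec hG).1, rfl⟩

lemma r_le : rD x n V ≤ n := Nat.findGreatest_le n

lemma r_max {i : ℕ} (h1 : rD x n V < i) (h2 : i ≤ n) : ¬ Pr x n V i :=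
  Nat.findGreatest_is_greatest h1 h2

/-- any value strictly after `q` is `≥ w` -/
lemma val_ge {i : ℕ} (h1 : qD x n V < i) (h2 : i ≤ n) : wD x n V ≤ V i := by
  obtain ⟨j, hjmem, hjmin⟩ :=
    Finset.exists_min_image (Finset.Icc i n) V ⟨i, by simp [h2]⟩
  simp only [Finset.mem_Icc] at hjmem
  have hlad : Lad n V j := fun k hk1 hk2 =>
    hjmin k (Finset.mem_Icc.mpr ⟨le_trans hjmem.1 hk1, hk2⟩)
  have hq : ((hh x : ℕ) : ℤ) ≤ V j := q_max hG (by omega) hjmem.2 hlad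
  have hrj : n - dD x n V ≤ j := rP_min hG hjmem.2 hlad hq
  have : wD x n V ≤ V j := (d_spec hG).1 j hrj hjmem.2
  exact le_trans this (hjmin i (by simp [h2]))

/-- any value strictly after `r` is `> w` -/
lemma val_gt {i : ℕ} (h1 : rD x n V < i) (h2 : i ≤ n) : wD x n V < V i := by
  have hq : qD x n V < rD x n V := by
    by_contra hc
    push_neg at hc
    have h3 := (r_spec hG).1 (qD x n V) hc (q_le hG)
    have h4 := (q_spec hG).2
    have h5 := (r_spec hG).2
    have h6 := w_ge hG
    omega
  have hge : wD x n V ≤ V i := val_ge hG (by omega) h2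
  rcases lt_or_eq_of_le hge with h | h
  · exact h
  · exfalso
    apply r_max hG h1 h2
    refine ⟨fun k hk1 hk2 => ?_, h.symm⟩
    rw [← h]
    exact val_ge hG (by omega) hk2

lemma q_lt_r : qD x n V < rD x n V := by
  by_contra hc
  push_neg at hc
  have h3 := (r_spec hG).1 (qD x n V) hc (q_le hG)
  have h4 := (q_spec hG).2
  have h5 := (r_spec hG).2
  have h6 := w_ge hG
  omega

lemma r_pos : 1 ≤ rD x n V := by
  by_contra hc
  push_neg at hc
  interval_cases h : rD x n V
  · have h5 := (r_spec hG).2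
    rw [h] at h5
    have := hG.h0
    have h6 := w_ge hG
    have h7 := hh_pos hG
    rw [this] at h5
    omega

lemma delta_nonneg : 0 ≤ deltaD x n V := by
  have h1 := w_ge hG
  have h2 := (two_hh hG).1
  unfold deltaD
  have : (x : ℤ) ≤ 2 * ((hh x : ℕ) : ℤ) := by exact_mod_cast h2
  omega

lemma delta_le_w : deltaD x n V ≤ wD x n V := by
  have := w_le hG
  unfold deltaD
  omega

end Facts

section EFacts
variable {R x n t : ℕ} {V : ℕ → ℤ} (hG : Good R x n t V)

include hG

lemma m_lt_n : mD x n V < n := by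
  have h1 := r_pos hG
  have h2 := r_le hG
  unfold mD
  omega

lemma E_zero : EN x n V 0 = 0 := by
  unfold EN
  rw [if_pos (Nat.zero_le _)]
  rw [Nat.add_zero, (r_spec hG).2]
  ring

lemma E_n : EN x n V n = 0 := by
  unfold EN
  rw [if_neg (by have := m_lt_n hG; omega)]
  simp only [Nat.sub_self]
  rw [if_neg (by omega), hG.h0]
  ring

lemma E_lower : ∀ p, 0 ≤ EN x n V p := by
  intro p
  unfold EN
  split_ifs with h1 h2
  · have hrp : qD x n V < rD x n V + p := by have := q_lt_r hG; omega
    have hle : rD x n V + p ≤ n := by unfold mD at h1; have := r_le hG; omega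
    have := val_ge hG hrp hle
    omega
  · have hle : n - p ≤ n := Nat.sub_le _ _
    have h3 := val_ge hG h2 hle
    have h4 := w_le hG
    unfold deltaD
    omega
  · have := hG.hlow (n - p)
    omega

lemma E_upper : ∀ p, EN x n V p ≤ (R : ℤ) := by
  intro p
  unfold EN
  split_ifs with h1 h2
  · have h3 := hG.hhigh (rD x n V + p)
    have h4 := w_ge hG
    have h5 := hh_pos hG
    have : (1 : ℤ) ≤ ((hh x : ℕ) : ℤ) := by exact_mod_cast h5
    omega
  · have h3 := hG.hhigh (n - p)
    have h4 := delta_nonneg hG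
    omega
  · have h3 := hG.hhigh (n - p)
    omega

/-- the key total variation estimate -/
lemma TVE_le : TVE x n V ≤ ∑ p ∈ Finset.range n, |V (p + 1) - V p| := by
  classical
  set q := qD x n V with hq
  set r := rD x n V with hr
  set w := wD x n V with hw
  set m := mD x n V with hm
  have hqr : q < r := q_lt_r hG
  have hrn : r ≤ n := r_le hG
  have hr1 : 1 ≤ r := r_pos hG
  have hmn : m = n - r := rfl
  -- the permutation
  set σ : ℕ → ℕ := fun p => if p < m then r + p else if p = m then r - 1 else n - 1 - p with hσ
  set τ : ℕ → ℕ := fun i => if r ≤ i then i - r else if i = r - 1 then m else n - 1 - i with hτ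
  have key : ∀ p ∈ Finset.range n,
      |EN x n V (p + 1) - EN x n V p| ≤ |V (σ p + 1) - V (σ p)| := by
    intro p hp
    rw [Finset.mem_range] at hp
    by_cases h1 : p < m
    · -- first чunk
      have e1 : EN x n V p = V (r + p) - w := by
        unfold EN; rw [if_pos (by omega)]
      have e2 : EN x n V (p + 1) = V (r + (p + 1)) - w := by
        unfold EN; rw [if_pos (by omega)]
      have eσ : σ p = r + p := by simp only [hσ, if_pos h1]
      rw [e1, e2, eσ]
      have : r + (p + 1) = r + p + 1 := by omega
      rw [this]
      have : V (r + p + 1) - w - (V (r + p) - w) = V (r + p + 1) - V (r + p) := by ring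
      rw [this]
    · by_cases h2 : p = m
      · -- boundary at m
        have eσ : σ p = r - 1 := by simp only [hσ, if_neg h1, if_pos h2]
        have e1 : EN x n V p = (x : ℤ) - w := by
          unfold EN
          rw [if_pos (by omega)]
          have : r + p = n := by omega
          rw [this, hG.hext n le_rfl]
        have harg : n - (p + 1) = r - 1 := by omega
        have e2 : EN x n V (p + 1) =
            V (r - 1) - (if q < r - 1 then deltaD x n V else 0) := by
          unfold EN
          rw [if_neg (by omega), harg]
        have hstep : r - 1 + 1 = r := by omega
        rw [e1, e2, eσ, hstep]
        by_cases h3 : q < r - 1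
        · rw [if_pos h3]
          have hval : V (r - 1) ≥ w := by
            rw [hw, hr]; exact val_ge hG (by omega) (by omega)
          have : V (r - 1) - deltaD x n V - ((x : ℤ) - w) = V (r - 1) - w := by
            unfold deltaD; rw [← hw]; ring
          rw [this, (r_spec hG).2, ← hw]
          rw [abs_of_nonneg (by omega), abs_of_nonpos (by omega)]
          omega
        · rw [if_neg h3]
          have hqe : q = r - 1 := by omega
          have hVq : V q < ((hh x : ℕ) : ℤ) := (q_spec hG).2
          have hVq0 : 0 ≤ V q := hG.hlow q
          have hwh : ((hh x : ℕ) : ℤ) ≤ w := w_ge hG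
          have hwx : w ≤ (x : ℤ) := w_le hG
          have h2h : (x : ℤ) ≤ 2 * ((hh x : ℕ) : ℤ) := by
            exact_mod_cast (two_hh hG).1
          have hh2 : 2 * ((hh x : ℕ) : ℤ) ≤ (x : ℤ) + 1 := by
            exact_mod_cast (two_hh hG).2
          have hVr : V r = w := by rw [hw, hr]; exact (r_spec hG).2
          rw [← hqe, hVr]
          have hgoal : |w - V q| = w - V q := abs_of_nonneg (by omega)
          rw [hgoal, abs_le]
          constructor <;> omega
      · -- reversed chunk
        have h3 : m < p := by omega
        have eσ : σ p = n - 1 - p := by simp only [hσ, if_neg h1, if_neg h2]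
        set i := n - 1 - p with hi
        have hnp : n - p = i + 1 := by omega
        have hnp1 : n - (p + 1) = i := by omega
        have hir : i + 1 < r + 1 := by omega
        have e1 : EN x n V p = V (i + 1) - (if q < i + 1 then deltaD x n V else 0) := by
          unfold EN
          rw [if_neg (by omega), hnp]
        have e2 : EN x n V (p + 1) = V i - (if q < i then deltaD x n V else 0) := by
          unfold EN
          rw [if_neg (by omega), hnp1]
        rw [e1, e2, eσ]
        rcases lt_trichotomy q i with h4 | h4 | h4
        · rw [if_pos h4, if_pos (by omega)]
          have : V i - deltaD x n V - (V (i + 1) - deltaD x n V) = V i - V (i + 1) := by ring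
          rw [this, abs_sub_comm]
        · rw [if_neg (by omega), if_pos (by omega)]
          have hin : i + 1 ≤ n := by omega
          have hVq1 : w ≤ V (i + 1) := by
            rw [hw]; exact val_ge hG (by omega) hin
          have hVq : V i < ((hh x : ℕ) : ℤ) := by rw [← h4]; exact (q_spec hG).2
          have hVq0 : 0 ≤ V i := hG.hlow i
          have hwh : ((hh x : ℕ) : ℤ) ≤ w := w_ge hG
          have hwx : w ≤ (x : ℤ) := w_le hG
          have h2h : (x : ℤ) ≤ 2 * ((hh x : ℕ) : ℤ) := by
            exact_mod_cast (two_hh hG).1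
          have hh2 : 2 * ((hh x : ℕ) : ℤ) ≤ (x : ℤ) + 1 := by
            exact_mod_cast (two_hh hG).2
          have hδ : deltaD x n V = 2 * w - (x : ℤ) := by rw [hw]; rfl
          have hRHS : |V (i + 1) - V i| = V (i + 1) - V i := abs_of_nonneg (by omega)
          rw [hRHS, abs_le]
          constructor <;> omega
        · rw [if_neg (by omega), if_neg (by omega)]
          have : V i - 0 - (V (i + 1) - 0) = V i - V (i + 1) := by ring
          rw [this, abs_sub_comm]
  calc TVE x n V ≤ ∑ p ∈ Finset.range n, |V (σ p + 1) - V (σ p)| :=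
        Finset.sum_le_sum key
    _ = ∑ i ∈ Finset.range n, |V (i + 1) - V i| := by
        apply Finset.sum_bij' (fun p _ => σ p) (fun i _ => τ i)
        · intro a ha
          rw [Finset.mem_range] at ha ⊢
          simp only [hσ]
          split_ifs with c1 c2 <;> omega
        · intro a ha
          rw [Finset.mem_range] at ha ⊢
          simp only [hτ]
          split_ifs with c1 c2 <;> omega
        · intro a ha
          rw [Finset.mem_range] at ha
          simp only [hσ, hτ]
          split_ifs with c1 c2 <;> omega
        · intro a ha
          rw [Finset.mem_range] at ha
          simp only [hσ, hτ]
          split_ifs with c1 c2 <;> omega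
        · intro a ha
          rfl

lemma TVE_nonneg : 0 ≤ TVE x n V := Finset.sum_nonneg fun p _ => abs_nonneg _

lemma TVv_eq : ∑ p ∈ Finset.range n, |V (p + 1) - V p| = (t : ℤ) - (n : ℤ) := by
  have := hG.hcost
  omega

lemma n_le_t : n ≤ t := by
  have h1 := TVv_eq hG
  have h2 : 0 ≤ ∑ p ∈ Finset.range n, |V (p + 1) - V p| :=
    Finset.sum_nonneg fun p _ => abs_nonneg _
  have : (n : ℤ) ≤ (t : ℤ) := by omega
  exact_mod_cast this

lemma k_eq : (kD x n t V : ℤ) = (t : ℤ) + 2 - (n : ℤ) - TVE x n V := by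
  have h1 := TVE_le hG
  have h2 := TVv_eq hG
  unfold kD
  rw [Int.toNat_of_nonneg]
  omega

lemma k_ge : 2 ≤ kD x n t V := by
  have h1 := TVE_le hG
  have h2 := TVv_eq hG
  have h3 := k_eq hG
  omega

lemma nD_ge : n < nD x n t V := by
  have := k_ge hG
  unfold nD
  omega

lemma nD_le : nD x n t V ≤ t + 2 := by
  have h1 := k_eq hG
  have h2 := TVE_nonneg hG
  have : ((nD x n t V : ℕ) : ℤ) ≤ (t : ℤ) + 2 := by
    unfold nD
    push_cast
    omega
  exact_mod_cast this

end EFacts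

/-- ℕ-indexed version of a `Fin`-indexed path, clamped at `n`. -/
def VN (n : ℕ) (v : Fin (n + 1) → ℤ) : ℕ → ℤ := fun i => v ⟨min i n, by omega⟩

lemma good_of_mem {R x n t : ℕ} {v : Fin (n + 1) → ℤ} (hv : v ∈ slabSet R x n t)
    (hx : 1 ≤ x) (hn : 1 ≤ n) : Good R x n t (VN n v) := by
  obtain ⟨h1, h2, h3, h4⟩ := hv
  constructor
  · show v _ = 0
    convert h1 using 2
    ext
    simp
  · intro i; exact (h2 _).1
  · intro i; exact (h2 _).2
  · intro i hi
    show v _ = (x : ℤ)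
    convert h3 using 2
    ext
    simp only [Fin.val_last]
    exact min_eq_right hi
  · rw [← h4]
    congr 1
    rw [← Fin.sum_univ_eq_sum_range (fun p => |VN n v (p + 1) - VN n v p|) n]
    apply Finset.sum_congr rfl
    intro i _
    have ha : VN n v (i.val + 1) = v i.succ := by
      unfold VN
      congr 1
      ext
      simp only [Fin.val_succ]
      have := i.isLt
      omega
    have hb : VN n v i.val = v i.castSucc := by
      unfold VN
      congr 1
      ext
      simp only [Fin.coe_castSucc]
      have := i.isLt
      omega
    rw [ha, hb]
  · exact hx
  · exact hn

section WFacts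
variable {R x n t : ℕ} {V : ℕ → ℤ} (hG : Good R x n t V)

include hG

lemma WN_cost : ((nD x n t V : ℕ) : ℤ) +
    ∑ p ∈ Finset.range (nD x n t V), |WN x n V (p + 1) - WN x n V p| = (t : ℤ) + 2 := by
  have hnn : n ≤ nD x n t V := le_of_lt (nD_ge hG)
  have hsplit : ∑ p ∈ Finset.range (nD x n t V), |WN x n V (p + 1) - WN x n V p| =
      (∑ p ∈ Finset.Ico 0 n, |WN x n V (p + 1) - WN x n V p|) +
      ∑ p ∈ Finset.Ico n (nD x n t V), |WN x n V (p + 1) - WN x n V p| := by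
    rw [Finset.range_eq_Ico, ← Finset.sum_Ico_consecutive _ (Nat.zero_le n) hnn]
  have hfirst : ∑ p ∈ Finset.Ico 0 n, |WN x n V (p + 1) - WN x n V p| = TVE x n V := by
    rw [← Finset.range_eq_Ico]
    apply Finset.sum_congr rfl
    intro p hp
    rw [Finset.mem_range] at hp
    unfold WN
    rw [if_pos (by omega), if_pos (by omega)]
  have hsecond : ∑ p ∈ Finset.Ico n (nD x n t V), |WN x n V (p + 1) - WN x n V p| = 0 := by
    apply Finset.sum_eq_zero
    intro p hp
    rw [Finset.mem_Ico] at hp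
    have hp1 : WN x n V (p + 1) = 0 := by
      unfold WN; rw [if_neg (by omega)]
    have hp2 : WN x n V p = 0 := by
      unfold WN
      by_cases hc : p ≤ n
      · rw [if_pos hc]
        have : p = n := by omega
        rw [this]
        exact E_n hG
      · rw [if_neg hc]
    rw [hp1, hp2]
    simp
  rw [hsplit, hfirst, hsecond]
  have hk := k_eq hG
  unfold nD
  push_cast
  omega

lemma W_mem : (fun p : Fin (nD x n t V + 1) => WN x n V p.val) ∈
    slabSet R 0 (nD x n t V) (t + 2) := by
  refine ⟨?_, ?_, ?_, ?_⟩
  · show WN x n V ((0 : Fin (nD x n t V + 1)) : ℕ) = 0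
    have : ((0 : Fin (nD x n t V + 1)) : ℕ) = 0 := rfl
    rw [this]
    unfold WN
    rw [if_pos (by omega)]
    exact E_zero hG
  · intro i
    dsimp only
    unfold WN
    split_ifs with hc
    · exact ⟨E_lower hG _, E_upper hG _⟩
    · exact ⟨le_refl 0, Int.natCast_nonneg R⟩
  · show WN x n V ((Fin.last (nD x n t V)) : ℕ) = ((0 : ℕ) : ℤ)
    have : ((Fin.last (nD x n t V)) : ℕ) = nD x n t V := rfl
    rw [this]
    unfold WN
    rw [if_neg (by have := nD_ge hG; omega)]
    simp
  · have hconv : ∑ i : Fin (nD x n t V),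
        |(fun p : Fin (nD x n t V + 1) => WN x n V p.val) i.succ -
         (fun p : Fin (nD x n t V + 1) => WN x n V p.val) i.castSucc| =
        ∑ p ∈ Finset.range (nD x n t V), |WN x n V (p + 1) - WN x n V p| := by
      rw [← Fin.sum_univ_eq_sum_range (fun p => |WN x n V (p + 1) - WN x n V p|)]
      apply Finset.sum_congr rfl
      intro i _
      rfl
    rw [hconv]
    push_cast
    have := WN_cost hG
    push_cast at this
    omega

end WFacts

section Key
variable {R x t n n2 : ℕ} {V V2 : ℕ → ℤ}

lemma EN_at_m {R x n t : ℕ} {V : ℕ → ℤ} (hG : Good R x n t V) :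
    EN x n V (mD x n V) = (x : ℤ) - wD x n V := by
  unfold EN
  rw [if_pos le_rfl]
  have h1 : rD x n V + mD x n V = n := by
    have := r_le hG; unfold mD; omega
  rw [h1, hG.hext n le_rfl]

lemma key (hG : Good R x n t V) (hG2 : Good R x n2 t V2) (hle : n ≤ n2)
    (hm : mD x n V = mD x n2 V2) (hl : lD x n V = lD x n2 V2)
    (hW : ∀ p, p ≤ n2 → WN x n V p = WN x n2 V2 p) :
    n = n2 ∧ ∀ i, V i = V2 i := by
  have hrn : rD x n V ≤ n := r_le hG
  have hrn2 : rD x n2 V2 ≤ n2 := r_le hG2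
  have hqr : qD x n V < rD x n V := q_lt_r hG
  have hqr2 : qD x n2 V2 < rD x n2 V2 := q_lt_r hG2
  have hr1 : 1 ≤ rD x n V := r_pos hG
  have hmm : mD x n V = n - rD x n V := rfl
  have hmm2 : mD x n2 V2 = n2 - rD x n2 V2 := rfl
  set d := n2 - n with hd
  have hr2 : rD x n2 V2 = rD x n V + d := by omega
  have hq2 : qD x n2 V2 = qD x n V + d := by
    have h1 : lD x n V = rD x n V - 1 - qD x n V := rfl
    have h2 : lD x n2 V2 = rD x n2 V2 - 1 - qD x n2 V2 := rfl
    omega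
  have hEeq : ∀ p, p ≤ n → EN x n V p = EN x n2 V2 p := by
    intro p hp
    have h1 := hW p (by omega)
    unfold WN at h1
    rw [if_pos hp, if_pos (by omega)] at h1
    exact h1
  have hw2 : wD x n2 V2 = wD x n V := by
    have h1 := hEeq (mD x n V) (by have := m_lt_n hG; omega)
    rw [EN_at_m hG, hm, EN_at_m hG2] at h1
    omega
  have hδ2 : deltaD x n2 V2 = deltaD x n V := by
    unfold deltaD
    rw [hw2]
  -- block equalities
  have block1 : ∀ i, rD x n V ≤ i → i ≤ n → V2 (i + d) = V i := by
    intro i hi1 hi2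
    have h1 := hEeq (i - rD x n V) (by omega)
    unfold EN at h1
    rw [if_pos (by omega), if_pos (by omega)] at h1
    have e1 : rD x n V + (i - rD x n V) = i := by omega
    have e2 : rD x n2 V2 + (i - rD x n V) = i + d := by omega
    rw [e1, e2, hw2] at h1
    omega
  have block2 : ∀ i, qD x n V < i → i < rD x n V → V2 (i + d) = V i := by
    intro i hi1 hi2
    have h1 := hEeq (n - i) (by omega)
    unfold EN at h1
    rw [if_neg (show ¬(n - i ≤ mD x n V) by omega),
        if_neg (show ¬(n - i ≤ mD x n2 V2) by omega)] at h1
    have e1 : n - (n - i) = i := by omega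
    have e2 : n2 - (n - i) = i + d := by omega
    rw [e1, e2] at h1
    rw [if_pos (show qD x n V < i by omega),
        if_pos (show qD x n2 V2 < i + d by omega), hδ2] at h1
    omega
  have block3 : ∀ i, i ≤ qD x n V → V2 (i + d) = V i := by
    intro i hi
    have h1 := hEeq (n - i) (by omega)
    unfold EN at h1
    rw [if_neg (show ¬(n - i ≤ mD x n V) by omega),
        if_neg (show ¬(n - i ≤ mD x n2 V2) by omega)] at h1
    have e1 : n - (n - i) = i := by omega
    have e2 : n2 - (n - i) = i + d := by omega
    rw [e1, e2] at h1
    rw [if_neg (show ¬(qD x n V < i) by omega),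
        if_neg (show ¬(qD x n2 V2 < i + d) by omega)] at h1
    simpa using h1.symm
  have hall : ∀ i, i ≤ n → V2 (i + d) = V i := by
    intro i hi
    rcases le_or_gt i (qD x n V) with h | h
    · exact block3 i h
    rcases lt_or_ge i (rD x n V) with h' | h'
    · exact block2 i h h'
    · exact block1 i h' hi
  have hzero : ∀ j, j < d → V2 j = 0 := by
    intro j hj
    have hp1 : n < n2 - j := by omega
    have hp2 : n2 - j ≤ n2 := by omega
    have h1 := hW (n2 - j) hp2
    unfold WN at h1
    rw [if_neg (by omega), if_pos (by omega)] at h1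
    unfold EN at h1
    rw [if_neg (show ¬(n2 - j ≤ mD x n2 V2) by have := m_lt_n hG; omega)] at h1
    have e2 : n2 - (n2 - j) = j := by omega
    rw [e2] at h1
    rw [if_neg (show ¬(qD x n2 V2 < j) by omega)] at h1
    simpa using h1.symm
  have hzero' : ∀ j, j ≤ d → V2 j = 0 := by
    intro j hj
    rcases lt_or_eq_of_le hj with h | h
    · exact hzero j h
    · rw [h]
      have := hall 0 (by omega)
      rw [hG.h0] at this
      simpa using this
  -- total variation equality
  have hTV : ∑ p ∈ Finset.range n2, |V2 (p + 1) - V2 p| =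
      ∑ p ∈ Finset.range n, |V (p + 1) - V p| := by
    have hsplit : ∑ p ∈ Finset.range n2, |V2 (p + 1) - V2 p| =
        (∑ p ∈ Finset.Ico 0 d, |V2 (p + 1) - V2 p|) +
        ∑ p ∈ Finset.Ico d n2, |V2 (p + 1) - V2 p| := by
      rw [Finset.range_eq_Ico, ← Finset.sum_Ico_consecutive _ (Nat.zero_le d) (by omega)]
    have hz : ∑ p ∈ Finset.Ico 0 d, |V2 (p + 1) - V2 p| = 0 := by
      apply Finset.sum_eq_zero
      intro p hp
      rw [Finset.mem_Ico] at hp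
      rw [hzero' p (by omega), hzero' (p + 1) (by omega)]
      simp
    have hs : ∑ p ∈ Finset.Ico d n2, |V2 (p + 1) - V2 p| =
        ∑ p ∈ Finset.range n, |V (p + 1) - V p| := by
      rw [Finset.sum_Ico_eq_sum_range]
      have hn2d : n2 - d = n := by omega
      rw [hn2d]
      apply Finset.sum_congr rfl
      intro p hp
      rw [Finset.mem_range] at hp
      have e1 : d + p + 1 = (p + 1) + d := by omega
      have e2 : d + p = p + d := by omega
      rw [e1, e2, hall (p + 1) (by omega), hall p (by omega)]
    rw [hsplit, hz, hs, zero_add]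
  have hc1 := hG.hcost
  have hc2 := hG2.hcost
  rw [hTV] at hc2
  have hnn : (n : ℤ) = (n2 : ℤ) := by omega
  have hn2 : n = n2 := by exact_mod_cast hnn
  have hd0 : d = 0 := by omega
  refine ⟨hn2, fun i => ?_⟩
  rcases le_or_gt i n with h | h
  · have := hall i h
    rw [hd0] at this
    simpa using this.symm
  · rw [hG.hext i (by omega), hG2.hext i (by omega)]

end Key

lemma slab_finite (R x n t : ℕ) : (slabSet R x n t).Finite := by
  apply Set.Finite.subset (Set.Finite.pi (fun _ : Fin (n + 1) => Set.finite_Icc (0 : ℤ) R))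
  intro v hv
  rw [Set.mem_pi]
  intro i _
  rw [Set.mem_Icc]
  exact hv.2.1 i

noncomputable def FD (R x n t : ℕ) : Finset (Fin (n + 1) → ℤ) :=
  (slab_finite R x n t).toFinset

lemma card_FD (R x n t : ℕ) : Nat.card ↥(slabSet R x n t) = (FD R x n t).card := by
  rw [Nat.card_coe_set_eq, Set.ncard_eq_toFinset_card _ (slab_finite R x n t)]
  rfl

lemma VN_at {n : ℕ} (v : Fin (n + 1) → ℤ) (p : Fin (n + 1)) : VN n v p.val = v p := by
  unfold VN
  congr 1
  ext
  simp only
  have := p.isLt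
  omega

lemma VN_injOn (R x n t : ℕ) : Set.InjOn (VN n) (FD R x n t) := by
  intro a _ b _ hab
  funext p
  rw [← VN_at a p, ← VN_at b p, hab]

/-- `VN` of the padded path agrees with `WN` everywhere -/
lemma VN_WN {R x n t : ℕ} {V : ℕ → ℤ} (hG : Good R x n t V) :
    VN (nD x n t V) (fun p : Fin (nD x n t V + 1) => WN x n V p.val) = WN x n V := by
  funext p
  unfold VN
  simp only
  by_cases hp : p ≤ nD x n t V
  · congr 1
    omega
  · have h1 : min p (nD x n t V) = nD x n t V := by omega
    rw [h1]
    unfold WN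
    rw [if_neg (by have := nD_ge hG; omega), if_neg (by have := nD_ge hG; omega)]

/-- the injection -/
noncomputable def Phi (t : ℕ) : (Σ _ : ℕ, Σ _ : ℕ, (ℕ → ℤ)) →
    (ℕ × ℕ × ℕ) × (Σ _ : ℕ, (ℕ → ℤ)) :=
  fun s => ((s.1, mD s.1 s.2.1 s.2.2, lD s.1 s.2.1 s.2.2),
    ⟨nD s.1 s.2.1 t s.2.2, WN s.1 s.2.1 s.2.2⟩)

lemma main_count {R t : ℕ} (hR : 2 ≤ R) (ht : 1 ≤ t) :
    ∑ x ∈ Finset.Icc 1 (R - 1), ∑ n ∈ Finset.Icc 1 t, Nat.card ↥(slabSet R x n t) ≤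
      4 * R * t ^ 2 * ∑ n' ∈ Finset.Icc 1 (t + 2), Nat.card ↥(slabSet R 0 n' (t + 2)) := by
  classical
  set Dom : Finset (Σ _ : ℕ, Σ _ : ℕ, (ℕ → ℤ)) :=
    (Finset.Icc 1 (R - 1)).sigma
      (fun x => (Finset.Icc 1 t).sigma (fun n => (FD R x n t).image (VN n))) with hDom
  set Tgt : Finset ((ℕ × ℕ × ℕ) × (Σ _ : ℕ, (ℕ → ℤ))) :=
    ((Finset.Icc 1 (R - 1)) ×ˢ (Finset.Iic t) ×ˢ (Finset.Iic t)) ×ˢ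
      ((Finset.Icc 1 (t + 2)).sigma
        (fun n' => (FD R 0 n' (t + 2)).image (VN n'))) with hTgt
  -- membership data for domain elements
  have domGood : ∀ x n (f : ℕ → ℤ),
      (⟨x, n, f⟩ : Σ _ : ℕ, Σ _ : ℕ, (ℕ → ℤ)) ∈ Dom →
      1 ≤ x ∧ 1 ≤ n ∧ n ≤ t ∧ x ∈ Finset.Icc 1 (R - 1) ∧ Good R x n t f := by
    intro x n f hs
    rw [hDom] at hs
    simp only [Finset.mem_sigma, Finset.mem_image] at hs
    obtain ⟨hx, hn, v, hv, hvf⟩ := hs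
    rw [Finset.mem_Icc] at hn
    have hx1 : 1 ≤ x := by
      rw [Finset.mem_Icc] at hx
      exact hx.1
    have hmem : v ∈ slabSet R x n t := (slab_finite R x n t).mem_toFinset.mp hv
    refine ⟨hx1, hn.1, hn.2, hx, ?_⟩
    rw [← hvf]
    exact good_of_mem hmem hx1 hn.1
  have hmap : ∀ s ∈ Dom, Phi t s ∈ Tgt := by
    rintro ⟨x, n, f⟩ hs
    obtain ⟨hx1, hn1, hnt, hxI, hG⟩ := domGood x n f hs
    have hPhi : Phi t ⟨x, n, f⟩ =
        ((x, mD x n f, lD x n f), ⟨nD x n t f, WN x n f⟩) := rfl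
    rw [hPhi, hTgt, Finset.mem_product]
    constructor
    · rw [Finset.mem_product]
      refine ⟨hxI, ?_⟩
      rw [Finset.mem_product]
      constructor
      · rw [Finset.mem_Iic]
        show mD x n f ≤ t
        have h2 : mD x n f ≤ n := by unfold mD; omega
        omega
      · rw [Finset.mem_Iic]
        show lD x n f ≤ t
        have h1 := r_le hG
        have h2 : lD x n f ≤ n := by unfold lD; omega
        omega
    · rw [Finset.mem_sigma]
      constructor
      · rw [Finset.mem_Icc]
        show 1 ≤ nD x n t f ∧ nD x n t f ≤ t + 2
        refine ⟨?_, nD_le hG⟩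
        have := nD_ge hG
        omega
      · rw [Finset.mem_image]
        refine ⟨fun p : Fin (nD x n t f + 1) => WN x n f p.val, ?_, VN_WN hG⟩
        exact (slab_finite R 0 (nD x n t f) (t + 2)).mem_toFinset.mpr (W_mem hG)
  have hinj : Set.InjOn (Phi t) Dom := by
    rintro ⟨x, n, f⟩ ha ⟨x2, n2, f2⟩ hb heq
    obtain ⟨hx1, hn1, hnt, hxI, hG⟩ := domGood x n f ha
    obtain ⟨hx12, hn12, hnt2, hxI2, hG2⟩ := domGood x2 n2 f2 hb
    have hPhi1 : Phi t ⟨x, n, f⟩ =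
        ((x, mD x n f, lD x n f), ⟨nD x n t f, WN x n f⟩) := rfl
    have hPhi2 : Phi t ⟨x2, n2, f2⟩ =
        ((x2, mD x2 n2 f2, lD x2 n2 f2), ⟨nD x2 n2 t f2, WN x2 n2 f2⟩) := rfl
    rw [hPhi1, hPhi2] at heq
    have h1 : (x, mD x n f, lD x n f) = (x2, mD x2 n2 f2, lD x2 n2 f2) :=
      congrArg Prod.fst heq
    have hWfun0 : WN x n f = WN x2 n2 f2 :=
      congrArg (fun z => (Prod.snd z).snd) heq
    rw [Prod.mk.injEq, Prod.mk.injEq] at h1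
    obtain ⟨hxx, hmm, hll⟩ := h1
    subst hxx
    have hWfun : WN x n f = WN x n2 f2 := hWfun0
    have hkey : n = n2 ∧ ∀ i, f i = f2 i := by
      rcases le_total n n2 with hle | hle
      · exact key hG hG2 hle hmm hll (fun p _ => congrFun hWfun p)
      · have := key hG2 hG hle hmm.symm hll.symm (fun p _ => (congrFun hWfun p).symm)
        exact ⟨this.1.symm, fun i => (this.2 i).symm⟩
    obtain ⟨hnn, hff⟩ := hkey
    subst hnn
    have : f = f2 := funext hff
    rw [this]
  have hcard := Finset.card_le_card_of_injOn (Phi t) hmap hinj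
  -- compute the two cardinalities
  have hdomcard : Dom.card =
      ∑ x ∈ Finset.Icc 1 (R - 1), ∑ n ∈ Finset.Icc 1 t, Nat.card ↥(slabSet R x n t) := by
    rw [hDom, Finset.card_sigma]
    apply Finset.sum_congr rfl
    intro x _
    rw [Finset.card_sigma]
    apply Finset.sum_congr rfl
    intro n _
    rw [Finset.card_image_of_injOn (VN_injOn R x n t)]
    exact (card_FD R x n t).symm
  have htgtcard : Tgt.card ≤ (R - 1) * ((t + 1) * (t + 1)) *
      ∑ n' ∈ Finset.Icc 1 (t + 2), Nat.card ↥(slabSet R 0 n' (t + 2)) := by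
    rw [hTgt, Finset.card_product, Finset.card_product, Finset.card_product]
    rw [Nat.card_Icc, Nat.card_Iic]
    have hs : ((Finset.Icc 1 (t + 2)).sigma
        (fun n' => (FD R 0 n' (t + 2)).image (VN n'))).card ≤
        ∑ n' ∈ Finset.Icc 1 (t + 2), Nat.card ↥(slabSet R 0 n' (t + 2)) := by
      rw [Finset.card_sigma]
      apply Finset.sum_le_sum
      intro n' _
      calc ((FD R 0 n' (t + 2)).image (VN n')).card ≤ (FD R 0 n' (t + 2)).card :=
            Finset.card_image_le
        _ = Nat.card ↥(slabSet R 0 n' (t + 2)) := (card_FD R 0 n' (t + 2)).symm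
    calc (R - 1 + 1 - 1) * ((t + 1) * (t + 1)) *
          ((Finset.Icc 1 (t + 2)).sigma
            (fun n' => (FD R 0 n' (t + 2)).image (VN n'))).card ≤
        (R - 1 + 1 - 1) * ((t + 1) * (t + 1)) *
          ∑ n' ∈ Finset.Icc 1 (t + 2), Nat.card ↥(slabSet R 0 n' (t + 2)) := by
          exact Nat.mul_le_mul_left _ hs
      _ = (R - 1) * ((t + 1) * (t + 1)) *
          ∑ n' ∈ Finset.Icc 1 (t + 2), Nat.card ↥(slabSet R 0 n' (t + 2)) := by
          have he : R - 1 + 1 - 1 = R - 1 := by omega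
          rw [he]
  have hfinal : (R - 1) * ((t + 1) * (t + 1)) *
      ∑ n' ∈ Finset.Icc 1 (t + 2), Nat.card ↥(slabSet R 0 n' (t + 2)) ≤
      4 * R * t ^ 2 * ∑ n' ∈ Finset.Icc 1 (t + 2), Nat.card ↥(slabSet R 0 n' (t + 2)) := by
    apply Nat.mul_le_mul_right
    have h1 : t + 1 ≤ 2 * t := by omega
    calc (R - 1) * ((t + 1) * (t + 1)) ≤ R * ((2 * t) * (2 * t)) := by
          apply Nat.mul_le_mul (by omega)
          exact Nat.mul_le_mul h1 h1
      _ = 4 * R * t ^ 2 := by ring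
  omega

end SlabAux

/-- **Incomplete excursions versus complete excursions:** there is a constant `C > 0` such
that for all `R ≥ 2` and `t ≥ 1`,
`Σ_{x=1}^{R−1} Σ_{n=1}^t |D^{R,x}_{n,t}| ≤ C R t² Σ_{n=1}^{t+2} |A^R_{n,t+2}|`, where
`A^R_{n,t} = D^{R,0}_{n,t}`. -/
theorem slab_interior_le_complete :
    ∃ C : ℝ, 0 < C ∧ ∀ R t : ℕ, 2 ≤ R → 1 ≤ t →
      ((∑ x ∈ Finset.Icc 1 (R - 1), ∑ n ∈ Finset.Icc 1 t,
          Nat.card ↥(slabSet R x n t) : ℕ) : ℝ) ≤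
        C * R * t ^ 2 *
          ((∑ n ∈ Finset.Icc 1 (t + 2), Nat.card ↥(slabSet R 0 n (t + 2)) : ℕ) : ℝ) := by
  refine ⟨4, by norm_num, fun R t hR ht => ?_⟩
  have hmain := SlabAux.main_count hR ht
  calc ((∑ x ∈ Finset.Icc 1 (R - 1), ∑ n ∈ Finset.Icc 1 t,
          Nat.card ↥(slabSet R x n t) : ℕ) : ℝ) ≤
      ((4 * R * t ^ 2 * ∑ n ∈ Finset.Icc 1 (t + 2),
          Nat.card ↥(slabSet R 0 n (t + 2)) : ℕ) : ℝ) := by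
        exact_mod_cast Nat.cast_le.mpr hmain
    _ = 4 * R * t ^ 2 *
          ((∑ n ∈ Finset.Icc 1 (t + 2), Nat.card ↥(slabSet R 0 n (t + 2)) : ℕ) : ℝ) := by
        push_cast
        ring
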